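/- Let K ≥ 1, let X be a nonempty finite set (of first-stage designs), let A : X → Set (ℝ^K) assign to each x a nonempty finite set A x of achievable objective vectors, and let Q be a nonempty finite subset of ℝ^K (the ideal Pareto front). Then the minimum over x ∈ X of I(ParetoSet (A x), Q) equals the minimum over x ∈ X and over functions s : Q → ℝ^K with s q ∈ A x for all q ∈ Q, of max over q ∈ Q and i ∈ Fin K of (s q i − q i). (This is the equivalence between the flex-hand problem min_x I(P(x), P*) and its reformulation as a single optimization problem with one second-stage solution per ideal Pareto point.) -/

import Mathlib

/-- The Pareto set of `S ⊆ ℝ^K`: points of `S` that are minimal under the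
componentwise partial order (no other point of `S` strictly dominates them). -/
def ParetoSet {K : ℕ} (S : Set (Fin K → ℝ)) : Set (Fin K → ℝ) :=
  {p | p ∈ S ∧ ∀ q ∈ S, (∀ i, q i ≤ p i) → q = p}

/-- The additive binary `ε`-indicator `I(P,Q)`: the smallest `ε ∈ ℝ` such that
every `q ∈ Q` is weakly dominated within `ε` by some `p ∈ P`. -/
noncomputable def epsInd {K : ℕ} (P Q : Set (Fin K → ℝ)) : ℝ :=
  sInf {ε : ℝ | ∀ q ∈ Q, ∃ p ∈ P, ∀ i, p i - q i ≤ ε}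


/-!
Since a finite set `S` is dominated by its Pareto points, replacing `ParetoSet (A x)` by `A x`
does not change the `ε`-indicator. For a finite `S`, the indicator `I(S, Q)` is attained by the
choice `s` sending each `q ∈ Q` to a point of `S` minimising `maxᵢ (p i - q i)`, and every other
choice `s` with values in `S` gives a larger maximum. So `I(S, Q)` is the least value of the
reformulated problem for fixed `x`, and minimising over `x` commutes with taking least elements.
-/

open Finset

lemma exists_mem_paretoSet_le {K : ℕ} {S : Set (Fin K → ℝ)} (hS : S.Finite) {p : Fin K → ℝ}
    (hp : p ∈ S) : ∃ p' ∈ ParetoSet S, p' ≤ p := by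
  obtain ⟨a, ha⟩ := (hS.subset (Set.sep_subset S (· ≤ p))).exists_minimal ⟨p, hp, le_rfl⟩
  obtain ⟨haS, hap⟩ := ha.prop
  exact ⟨a, ⟨haS, fun q hqS hqa => ha.eq_of_le ⟨hqS, fun i => (hqa i).trans (hap i)⟩ hqa⟩, hap⟩

lemma epsInd_paretoSet {K : ℕ} {S : Set (Fin K → ℝ)} (hS : S.Finite) (Q : Set (Fin K → ℝ)) :
    epsInd (ParetoSet S) Q = epsInd S Q := by
  refine congrArg sInf (Set.ext fun ε => forall₂_congr fun q _ => ⟨?_, ?_⟩)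
  · rintro ⟨p, hp, hpε⟩
    exact ⟨p, hp.1, hpε⟩
  · rintro ⟨p, hp, hpε⟩
    obtain ⟨p', hp', hp'p⟩ := exists_mem_paretoSet_le hS hp
    exact ⟨p', hp', fun i => (sub_le_sub_right (hp'p i) _).trans (hpε i)⟩

lemma isLeast_epsInd {K : ℕ} (hK : (univ : Finset (Fin K)).Nonempty) {S : Set (Fin K → ℝ)}
    (hSf : S.Finite) (hS : S.Nonempty) {Q : Set (Fin K → ℝ)} (hQf : Q.Finite)
    (hQ : hQf.toFinset.Nonempty) :
    IsLeast {ε | ∃ s : (Fin K → ℝ) → (Fin K → ℝ), (∀ q ∈ Q, s q ∈ S) ∧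
        ε = hQf.toFinset.sup' hQ fun q => univ.sup' hK fun i => s q i - q i}
      (epsInd S Q) := by
  set gap : (Fin K → ℝ) → (Fin K → ℝ) → ℝ := fun p q => univ.sup' hK fun i => p i - q i
  set value : ((Fin K → ℝ) → (Fin K → ℝ)) → ℝ := fun s => hQf.toFinset.sup' hQ fun q => gap (s q) q
  have hSne : hSf.toFinset.Nonempty := by simpa using hS
  choose s₀ hs₀S hs₀min using fun q => exists_min_image hSf.toFinset (gap · q) hSne
  have hs₀_mem : ∀ q, s₀ q ∈ S := fun q => hSf.mem_toFinset.mp (hs₀S q)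
  have value_s₀_le : ∀ s, (∀ q ∈ Q, s q ∈ S) → value s₀ ≤ value s := fun s hs =>
    sup'_mono_fun fun q hq => hs₀min q (s q) (hSf.mem_toFinset.mpr (hs q (hQf.mem_toFinset.mp hq)))
  have feasible_iff : ∀ ε, (∀ q ∈ Q, ∃ p ∈ S, ∀ i, p i - q i ≤ ε) ↔ value s₀ ≤ ε := by
    intro ε
    constructor
    · intro h
      choose! s hsS hsε using h
      exact (value_s₀_le s hsS).trans <|
        sup'_le _ _ fun q hq => sup'_le _ _ fun i _ => hsε q (hQf.mem_toFinset.mp hq) i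
    · intro h q hq
      refine ⟨s₀ q, hs₀_mem q, fun i => ?_⟩
      calc s₀ q i - q i ≤ gap (s₀ q) q := le_sup' (fun i => s₀ q i - q i) (mem_univ i)
        _ ≤ value s₀ := le_sup' (fun q => gap (s₀ q) q) (hQf.mem_toFinset.mpr hq)
        _ ≤ ε := h
  have hepsInd : epsInd S Q = value s₀ := by
    rw [epsInd, Set.ext feasible_iff]
    exact csInf_Ici
  rw [hepsInd]
  exact ⟨⟨s₀, fun q _ => hs₀_mem q, rfl⟩, by rintro _ ⟨s, hs, rfl⟩; exact value_s₀_le s hs⟩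

lemma isLeast_iUnion_inf' {ι α : Type*} [Fintype ι] [Nonempty ι] [LinearOrder α]
    {T : ι → Set α} {a : ι → α} (h : ∀ i, IsLeast (T i) (a i)) :
    IsLeast (⋃ i, T i) (univ.inf' univ_nonempty a) := by
  obtain ⟨i, -, hi⟩ := exists_mem_eq_inf' univ_nonempty a
  refine ⟨Set.mem_iUnion.mpr ⟨i, hi ▸ (h i).1⟩, ?_⟩
  rintro b ⟨_, ⟨j, rfl⟩, hb⟩
  exact (inf'_le a (mem_univ j)).trans ((h j).2 hb)

/-- The flex-hand problem `min_{x} I(ParetoSet (A x), Q)` equals (indeed, is the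
minimum of) the reformulated single optimization problem, minimizing over `x`
and over choices `s` of one achievable point `s q ∈ A x` per ideal Pareto point
`q ∈ Q`, the value `max_{q ∈ Q} max_{i} (s q i − q i)`. -/
theorem flexHand_reformulation {K : ℕ} (hK : 1 ≤ K)
    (X : Type*) [Fintype X] [Nonempty X]
    (A : X → Set (Fin K → ℝ)) (hAf : ∀ x, (A x).Finite) (hA : ∀ x, (A x).Nonempty)
    (Q : Set (Fin K → ℝ)) (hQf : Q.Finite) (hQne : Q.Nonempty) :
    IsLeast
      {ε : ℝ | ∃ x : X, ∃ s : (Fin K → ℝ) → (Fin K → ℝ),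
        (∀ q ∈ Q, s q ∈ A x) ∧
        ε = hQf.toFinset.sup' (by simpa using hQne) fun q =>
              Finset.univ.sup' (Finset.univ_nonempty_iff.mpr ⟨⟨0, hK⟩⟩)
                fun i : Fin K => s q i - q i}
      (Finset.univ.inf' Finset.univ_nonempty
        fun x : X => epsInd (ParetoSet (A x)) Q) := by
  simp_rw [epsInd_paretoSet (hAf _)]
  rw [Set.ofPred_exists]
  exact isLeast_iUnion_inf' fun x => isLeast_epsInd _ (hAf x) (hA x) hQf _
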